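/- arXiv:1808.07366 — 5 statements merged into one kernel-verified Lean document; each statement's English description precedes it below -/
import Mathlib

section
/- Let f : ℝ² → ℝ be three times continuously differentiable with ‖D³f(x)‖ ≤ C₃ for all x ∈ ℝ². Fix an angle γ and let u = (cos γ, sin γ) and u⊥ = (−sin γ, cos γ) be the rotations of the standard basis vectors by γ. Then for every point p ∈ ℝ² and every h > 0, the five-point cross sum is invariant under rotation of the sampling stencil up to third order: |(f(p + h u) + f(p − h u) + f(p + h u⊥) + f(p − h u⊥)) − (f(p + h e₁) + f(p − h e₁) + f(p + h e₂) + f(p − h e₂))| ≤ (4/3)·C₃·h³. -/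
/-!
Along a line `t ↦ f (p + t • v)`, Taylor's theorem with Lagrange remainder, applied at `h` and
`-h`, gives `f (p + h • v) + f (p - h • v) - 2 f p = h² D²f(p)(v, v)` up to an error of at most
`C₃ ‖v‖³ |h|³ / 3`, since the odd terms cancel. Summing over the directions of an orthonormal basis turns the quadratic
terms into `h² Δf(p)`, which does not depend on the basis. Both stencils `{±u, ±u⊥}` and
`{±e₁, ±e₂}` come from orthonormal bases of `ℝ²`, so their cross sums differ by at most
`2 · 2 · C₃ h³ / 3`.
-/

open Set Laplacian

theorem abs_sub_taylor_two_le {g : ℝ → ℝ} (hg : ContDiff ℝ 3 g) {K : ℝ}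
    (hK : ∀ t, |iteratedDeriv 3 g t| ≤ K) (x : ℝ) :
    |g x - (g 0 + x * deriv g 0 + x ^ 2 / 2 * iteratedDeriv 2 g 0)| ≤ K * |x| ^ 3 / 6 := by
  rcases eq_or_ne x 0 with rfl | hx
  · simp
  obtain ⟨ξ, -, hξ⟩ := taylor_mean_remainder_lagrange_iteratedDeriv (n := 2) hx.symm
    hg.contDiffOn
  have hu : UniqueDiffOn ℝ (uIcc 0 x) := uniqueDiffOn_uIcc hx.symm
  have h0 : (0 : ℝ) ∈ uIcc 0 x := left_mem_uIcc
  have htaylor : taylorWithinEval g 2 (uIcc 0 x) 0 x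
      = g 0 + x * deriv g 0 + x ^ 2 / 2 * iteratedDeriv 2 g 0 := by
    simp only [taylor_within_apply, Finset.sum_range_succ, Finset.sum_range_zero,
      iteratedDerivWithin_zero, iteratedDerivWithin_one,
      (hg.differentiable (by norm_num) 0).derivWithin (hu 0 h0),
      iteratedDerivWithin_eq_iteratedDeriv (n := 2) hu (hg.contDiffAt.of_le (by norm_num)) h0,
      Nat.factorial_zero, Nat.factorial_one, Nat.factorial_two, smul_eq_mul]
    push_cast
    ring
  rw [htaylor] at hξ
  rw [hξ, abs_div, abs_mul, abs_pow, sub_zero]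
  norm_num [Nat.factorial]
  gcongr
  exact hK ξ

theorem abs_second_symmDiff_sub_le {g : ℝ → ℝ} (hg : ContDiff ℝ 3 g) {K : ℝ}
    (hK : ∀ t, |iteratedDeriv 3 g t| ≤ K) (x : ℝ) :
    |g x + g (-x) - 2 * g 0 - x ^ 2 * iteratedDeriv 2 g 0| ≤ K * |x| ^ 3 / 3 := by
  have hpos := abs_sub_taylor_two_le hg hK x
  have hneg := abs_sub_taylor_two_le hg hK (-x)
  rw [abs_neg] at hneg
  calc |g x + g (-x) - 2 * g 0 - x ^ 2 * iteratedDeriv 2 g 0|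
      = |(g x - (g 0 + x * deriv g 0 + x ^ 2 / 2 * iteratedDeriv 2 g 0))
          + (g (-x) - (g 0 + -x * deriv g 0 + (-x) ^ 2 / 2 * iteratedDeriv 2 g 0))| := by
        ring_nf
    _ ≤ K * |x| ^ 3 / 3 := (abs_add_le _ _).trans (by linarith)

theorem iteratedDeriv_comp_add_smul {𝕜 E F : Type*} [NontriviallyNormedField 𝕜]
    [NormedAddCommGroup E] [NormedSpace 𝕜 E] [NormedAddCommGroup F] [NormedSpace 𝕜 F]
    {f : E → F} {n : ℕ} (hf : ContDiff 𝕜 n f) (p v : E) (t : 𝕜) :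
    iteratedDeriv n (fun s => f (p + s • v)) t
      = iteratedFDeriv 𝕜 n f (p + t • v) (fun _ => v) := by
  have hcomp : (fun s => f (p + s • v))
      = (fun y => f (p + y)) ∘ (ContinuousLinearMap.id 𝕜 𝕜).smulRight v := by
    funext s; simp
  have hshift : ContDiff 𝕜 n (fun y => f (p + y)) := hf.comp (contDiff_const.add contDiff_id)
  rw [hcomp, iteratedDeriv_eq_iteratedFDeriv,
    ContinuousLinearMap.iteratedFDeriv_comp_right _ hshift t le_rfl]
  simp [iteratedFDeriv_comp_add_left]

theorem abs_second_symmDiff_sub_iteratedFDeriv_le {E : Type*} [NormedAddCommGroup E]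
    [NormedSpace ℝ E] {f : E → ℝ} (hf : ContDiff ℝ 3 f) {C : ℝ}
    (hC : ∀ x, ‖iteratedFDeriv ℝ 3 f x‖ ≤ C) (p v : E) (h : ℝ) :
    |f (p + h • v) + f (p - h • v) - 2 * f p - h ^ 2 * iteratedFDeriv ℝ 2 f p ![v, v]|
      ≤ C * ‖v‖ ^ 3 * |h| ^ 3 / 3 := by
  have hline : ContDiff ℝ 3 (fun t : ℝ => f (p + t • v)) := by fun_prop
  have hK (t : ℝ) : |iteratedDeriv 3 (fun s => f (p + s • v)) t| ≤ C * ‖v‖ ^ 3 := by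
    rw [iteratedDeriv_comp_add_smul hf, ← Real.norm_eq_abs]
    calc ‖iteratedFDeriv ℝ 3 f (p + t • v) fun _ => v‖
        ≤ ‖iteratedFDeriv ℝ 3 f (p + t • v)‖ * ∏ _i : Fin 3, ‖v‖ :=
          ContinuousMultilinearMap.le_opNorm _ _
      _ ≤ C * ‖v‖ ^ 3 := by rw [Finset.prod_const, Finset.card_fin]; gcongr; exact hC _
  have hline_bound := abs_second_symmDiff_sub_le hline hK h
  rw [iteratedDeriv_comp_add_smul (hf.of_le (by norm_num))] at hline_bound
  have hvv : ![v, v] = fun _ => v := by ext i; fin_cases i <;> rfl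
  simpa [hvv, sub_eq_add_neg] using hline_bound

def crossSum {E ι : Type*} [AddCommGroup E] [Module ℝ E] [Fintype ι] (f : E → ℝ) (p : E) (h : ℝ)
    (b : ι → E) : ℝ :=
  ∑ i, (f (p + h • b i) + f (p - h • b i))

section OrthonormalStencil

variable {E : Type*} [NormedAddCommGroup E] [InnerProductSpace ℝ E] [FiniteDimensional ℝ E]
  {ι : Type*} [Fintype ι] {f : E → ℝ} {C : ℝ}

theorem abs_crossSum_sub_laplacian_le (hf : ContDiff ℝ 3 f)
    (hC : ∀ x, ‖iteratedFDeriv ℝ 3 f x‖ ≤ C) (p : E) (h : ℝ) (b : OrthonormalBasis ι ℝ E) :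
    |crossSum f p h b - 2 * Fintype.card ι * f p - h ^ 2 * Δ f p|
      ≤ Fintype.card ι * (C * |h| ^ 3 / 3) := by
  have hsplit : crossSum f p h b - 2 * Fintype.card ι * f p - h ^ 2 * Δ f p
      = ∑ i, (f (p + h • b i) + f (p - h • b i) - 2 * f p
          - h ^ 2 * iteratedFDeriv ℝ 2 f p ![b i, b i]) := by
    simp [crossSum, InnerProductSpace.laplacian_eq_iteratedFDeriv_orthonormalBasis f b,
      Finset.sum_sub_distrib, Finset.mul_sum]
    ring
  rw [hsplit]
  calc _ ≤ ∑ i, |f (p + h • b i) + f (p - h • b i) - 2 * f p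
          - h ^ 2 * iteratedFDeriv ℝ 2 f p ![b i, b i]| := Finset.abs_sum_le_sum_abs _ _
    _ ≤ ∑ _i : ι, C * |h| ^ 3 / 3 := Finset.sum_le_sum fun i _ => by
        simpa [b.orthonormal.1 i] using abs_second_symmDiff_sub_iteratedFDeriv_le hf hC p (b i) h
    _ = Fintype.card ι * (C * |h| ^ 3 / 3) := by simp

theorem abs_crossSum_sub_crossSum_le (hf : ContDiff ℝ 3 f)
    (hC : ∀ x, ‖iteratedFDeriv ℝ 3 f x‖ ≤ C) (p : E) (h : ℝ) (b b' : OrthonormalBasis ι ℝ E) :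
    |crossSum f p h b - crossSum f p h b'| ≤ 2 * Fintype.card ι * C * |h| ^ 3 / 3 := by
  have hb := abs_crossSum_sub_laplacian_le hf hC p h b
  have hb' := abs_crossSum_sub_laplacian_le hf hC p h b'
  calc _ = |(crossSum f p h b - 2 * Fintype.card ι * f p - h ^ 2 * Δ f p)
          - (crossSum f p h b' - 2 * Fintype.card ι * f p - h ^ 2 * Δ f p)| := by ring_nf
    _ ≤ _ := (abs_sub _ _).trans (by linarith)

end OrthonormalStencil

section Rotation

open EuclideanSpace

theorem orthonormal_rotation (γ : ℝ) :
    Orthonormal ℝ ![Real.cos γ • single (0 : Fin 2) (1 : ℝ) + Real.sin γ • single 1 1,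
      -Real.sin γ • single (0 : Fin 2) (1 : ℝ) + Real.cos γ • single 1 1] := by
  rw [orthonormal_iff_ite]
  intro i j
  fin_cases i <;> fin_cases j <;>
    simp [inner_add_left, inner_add_right, inner_smul_left, inner_smul_right,
      inner_single_left, norm_eq, Fin.sum_univ_two] <;>
    ring

noncomputable def rotationBasis (γ : ℝ) : OrthonormalBasis (Fin 2) ℝ (EuclideanSpace ℝ (Fin 2)) :=
  OrthonormalBasis.mk (orthonormal_rotation γ)
    ((orthonormal_rotation γ).linearIndependent.span_eq_top_of_card_eq_finrank (by simp)).ge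

end Rotation

open EuclideanSpace in
/-- For a three times continuously differentiable image signal `f : ℝ² → ℝ` with
uniformly bounded third derivative, the five-point cross sum over a stencil rotated by an
angle `γ` agrees with the axis-aligned cross sum up to `(4/3) C₃ h³`. -/
theorem five_point_cross_rotation_invariance
    (f : EuclideanSpace ℝ (Fin 2) → ℝ) (C₃ : ℝ)
    (hf : ContDiff ℝ 3 f)
    (hbound : ∀ x, ‖iteratedFDeriv ℝ 3 f x‖ ≤ C₃)
    (γ : ℝ) (p : EuclideanSpace ℝ (Fin 2)) (h : ℝ) (hh : 0 < h) :
    |(f (p + h • (Real.cos γ • single (0 : Fin 2) (1 : ℝ) + Real.sin γ • single (1 : Fin 2) (1 : ℝ)))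
        + f (p - h • (Real.cos γ • single (0 : Fin 2) (1 : ℝ) + Real.sin γ • single (1 : Fin 2) (1 : ℝ)))
        + f (p + h • (-Real.sin γ • single (0 : Fin 2) (1 : ℝ) + Real.cos γ • single (1 : Fin 2) (1 : ℝ)))
        + f (p - h • (-Real.sin γ • single (0 : Fin 2) (1 : ℝ) + Real.cos γ • single (1 : Fin 2) (1 : ℝ))))
      - (f (p + h • single (0 : Fin 2) (1 : ℝ)) + f (p - h • single (0 : Fin 2) (1 : ℝ))
        + f (p + h • single (1 : Fin 2) (1 : ℝ)) + f (p - h • single (1 : Fin 2) (1 : ℝ)))|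
      ≤ (4 / 3) * C₃ * h ^ 3 := by
  have hcross := abs_crossSum_sub_crossSum_le hf hbound p h (rotationBasis γ)
    (EuclideanSpace.basisFun (Fin 2) ℝ)
  simp only [crossSum, Fin.sum_univ_two, rotationBasis, OrthonormalBasis.coe_mk,
    EuclideanSpace.basisFun_apply, Matrix.cons_val_zero, Matrix.cons_val_one, Fintype.card_fin,
    Nat.cast_ofNat, abs_of_pos hh] at hcross
  convert hcross using 2 <;> ring
end

section
/- Let f : ℝ² → ℝ be three times continuously differentiable with ‖D³f(x)‖ ≤ C₃ for all x ∈ ℝ². Then for every point p ∈ ℝ², every step size h > 0, and every translation vector w ∈ ℝ², the five-point cross difference is stable under translation: |(Σ_{e∈{±e₁,±e₂}} f(p + w + h e) − 4f(p + w)) − (Σ_{e∈{±e₁,±e₂}} f(p + h e) − 4f(p))| ≤ 2·C₃·h²·‖w‖. -/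
/-!
The five-point cross difference is the sum of the central second differences
`Δ²_v f x = f (x + v) + f (x - v) - 2 f x` along `v = h e₁` and `v = h e₂`. Differentiating in `x`
commutes with `Δ²_v`, so `D (Δ²_v f) = Δ²_v (D f)`, and a central second difference of a map is
bounded by `‖v‖²` times a bound on its second derivative. Hence `‖D (Δ²_v f)‖ ≤ C₃ ‖v‖²`, and the
mean value theorem bounds the effect of translating by `w` by `C₃ h² ‖w‖` for each direction.
-/

section CentralSecondDiff

variable {E F : Type*} [NormedAddCommGroup E] [NormedSpace ℝ E]
  [NormedAddCommGroup F] [NormedSpace ℝ F]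

def centralSecondDiff (f : E → F) (v x : E) : F :=
  f (x + v) + f (x - v) - (2 : ℝ) • f x

theorem hasFDerivAt_centralSecondDiff {f : E → F} (hf : Differentiable ℝ f) (v x : E) :
    HasFDerivAt (centralSecondDiff f v) (centralSecondDiff (fderiv ℝ f) v x) x :=
  (((hasFDerivAt_comp_add_right v).2 (hf _).hasFDerivAt).add
    ((hasFDerivAt_comp_sub v).2 (hf _).hasFDerivAt)).sub
    ((hf x).hasFDerivAt.const_smul (2 : ℝ))

theorem norm_centralSecondDiff_le {f : E → F} {K : ℝ} (hf : ContDiff ℝ 2 f)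
    (hK : ∀ x, ‖iteratedFDeriv ℝ 2 f x‖ ≤ K) (v x : E) :
    ‖centralSecondDiff f v x‖ ≤ K * ‖v‖ ^ 2 := by
  have hf' : Differentiable ℝ f := hf.differentiable (by norm_num)
  have hDf : Differentiable ℝ (fderiv ℝ f) :=
    (hf.fderiv_right (m := 1) le_rfl).differentiable (by norm_num)
  have hDf_lip (a b : E) : ‖fderiv ℝ f a - fderiv ℝ f b‖ ≤ K * ‖a - b‖ :=
    convex_univ.norm_image_sub_le_of_norm_fderiv_le (fun y _ => hDf y)
      (fun y _ => by simpa [← norm_iteratedFDeriv_fderiv] using hK y) trivial trivial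
  set D : E → F := fun y => f y - f (y - v)
  have hD (y : E) : HasFDerivAt D (fderiv ℝ f y - fderiv ℝ f (y - v)) y :=
    (hf' y).hasFDerivAt.sub ((hasFDerivAt_comp_sub v).2 (hf' _).hasFDerivAt)
  have hD_bound (y : E) : ‖fderiv ℝ D y‖ ≤ K * ‖v‖ := by
    simpa [(hD y).fderiv] using hDf_lip y (y - v)
  have hΔ : centralSecondDiff f v x = D (x + v) - D x := by
    simp only [centralSecondDiff, D, add_sub_cancel_right, two_smul]
    abel
  calc ‖centralSecondDiff f v x‖ = ‖D (x + v) - D x‖ := by rw [hΔ]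
    _ ≤ K * ‖v‖ * ‖x + v - x‖ :=
      convex_univ.norm_image_sub_le_of_norm_fderiv_le (fun y _ => (hD y).differentiableAt)
        (fun y _ => hD_bound y) trivial trivial
    _ = K * ‖v‖ ^ 2 := by rw [add_sub_cancel_left]; ring

theorem norm_centralSecondDiff_add_sub_le {f : E → F} {K : ℝ} (hf : ContDiff ℝ 3 f)
    (hK : ∀ x, ‖iteratedFDeriv ℝ 3 f x‖ ≤ K) (v x w : E) :
    ‖centralSecondDiff f v (x + w) - centralSecondDiff f v x‖ ≤ K * ‖v‖ ^ 2 * ‖w‖ := by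
  have hf' : Differentiable ℝ f := hf.differentiable (by norm_num)
  have hderiv_bound (y : E) : ‖fderiv ℝ (centralSecondDiff f v) y‖ ≤ K * ‖v‖ ^ 2 := by
    rw [(hasFDerivAt_centralSecondDiff hf' v y).fderiv]
    exact norm_centralSecondDiff_le (hf.fderiv_right (m := 2) le_rfl)
      (fun y => norm_iteratedFDeriv_fderiv.trans_le (hK y)) v y
  simpa using convex_univ.norm_image_sub_le_of_norm_fderiv_le (x := x) (y := x + w)
    (fun y _ => (hasFDerivAt_centralSecondDiff hf' v y).differentiableAt)
    (fun y _ => hderiv_bound y) trivial trivial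

end CentralSecondDiff

open EuclideanSpace in
theorem five_point_cross_translation_stability_general
    (f : EuclideanSpace ℝ (Fin 2) → ℝ) (C₃ : ℝ)
    (hf : ContDiff ℝ 3 f)
    (hbound : ∀ x, ‖iteratedFDeriv ℝ 3 f x‖ ≤ C₃)
    (p : EuclideanSpace ℝ (Fin 2)) (h : ℝ)
    (w : EuclideanSpace ℝ (Fin 2)) :
    |(f (p + w + h • single (0 : Fin 2) (1 : ℝ)) + f (p + w - h • single (0 : Fin 2) (1 : ℝ))
        + f (p + w + h • single (1 : Fin 2) (1 : ℝ)) + f (p + w - h • single (1 : Fin 2) (1 : ℝ))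
        - 4 * f (p + w))
      - (f (p + h • single (0 : Fin 2) (1 : ℝ)) + f (p - h • single (0 : Fin 2) (1 : ℝ))
        + f (p + h • single (1 : Fin 2) (1 : ℝ)) + f (p - h • single (1 : Fin 2) (1 : ℝ))
        - 4 * f p)|
      ≤ 2 * C₃ * h ^ 2 * ‖w‖ := by
  set Δ := fun (i : Fin 2) (x : EuclideanSpace ℝ (Fin 2)) => centralSecondDiff f (h • single i 1) x
  have hstep (i : Fin 2) : ‖h • single i (1 : ℝ)‖ ^ 2 = h ^ 2 := by simp [norm_smul]
  have hdir (i : Fin 2) : |Δ i (p + w) - Δ i p| ≤ C₃ * h ^ 2 * ‖w‖ := by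
    have := norm_centralSecondDiff_add_sub_le hf hbound (h • single i 1) p w
    rwa [hstep, Real.norm_eq_abs] at this
  calc _ = |(Δ 0 (p + w) - Δ 0 p) + (Δ 1 (p + w) - Δ 1 p)| := by
        simp only [Δ, centralSecondDiff, smul_eq_mul]
        ring_nf
    _ ≤ C₃ * h ^ 2 * ‖w‖ + C₃ * h ^ 2 * ‖w‖ :=
      (abs_add_le _ _).trans (add_le_add (hdir 0) (hdir 1))
    _ = 2 * C₃ * h ^ 2 * ‖w‖ := by ring

open EuclideanSpace in
/-- For a three times continuously differentiable image signal `f : ℝ² → ℝ` with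
uniformly bounded third derivative, the five-point cross difference is stable under
translation by a vector `w`: the gap is at most `2 C₃ h² ‖w‖`. -/
theorem five_point_cross_translation_stability
    (f : EuclideanSpace ℝ (Fin 2) → ℝ) (C₃ : ℝ)
    (hf : ContDiff ℝ 3 f)
    (hbound : ∀ x, ‖iteratedFDeriv ℝ 3 f x‖ ≤ C₃)
    (p : EuclideanSpace ℝ (Fin 2)) (h : ℝ) (hh : 0 < h)
    (w : EuclideanSpace ℝ (Fin 2)) :
    |(f (p + w + h • single (0 : Fin 2) (1 : ℝ)) + f (p + w - h • single (0 : Fin 2) (1 : ℝ))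
        + f (p + w + h • single (1 : Fin 2) (1 : ℝ)) + f (p + w - h • single (1 : Fin 2) (1 : ℝ))
        - 4 * f (p + w))
      - (f (p + h • single (0 : Fin 2) (1 : ℝ)) + f (p - h • single (0 : Fin 2) (1 : ℝ))
        + f (p + h • single (1 : Fin 2) (1 : ℝ)) + f (p - h • single (1 : Fin 2) (1 : ℝ))
        - 4 * f p)|
      ≤ 2 * C₃ * h ^ 2 * ‖w‖ :=
  five_point_cross_translation_stability_general f C₃ hf hbound p h w
end

section
/- Let f : ℝ² → ℝ be three times continuously differentiable with ‖D³f(x)‖ ≤ C₃ for all x ∈ ℝ², let α₀, α₁ be real filter coefficients and γ a rotation angle. Then for every ε > 0 there exists h₀ > 0 such that for all grid spacings h with 0 < h ≤ h₀ and every point p ∈ ℝ², the equivariance gap of the degree-one filter under rotation by γ around p satisfies |((α₀ + α₁)f(p) − (α₁/4)Σ_{e∈{±e₁,±e₂}} f(p + h R_γ e)) − ((α₀ + α₁)f(p) − (α₁/4)Σ_{e∈{±e₁,±e₂}} f(p + h e))| ≤ ε. That is, for sufficiently high image resolution the filter response is within any prescribed tolerance of being rotation invariant. -/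
/-!
The centre terms cancel, and for a unit vector `u` the second central difference
`f (p + h u) + f (p - h u) - 2 f p` equals `h² D²f(p)(u, u)` up to `2 C₃ h³`, by Taylor's
theorem along the line through `p`. The quadratic terms of the two stencils agree because
`D²f(p)(u, u) + D²f(p)(u⊥, u⊥)`, the Laplacian, does not change under rotation, so the gap is
`O(h³)` uniformly in `p`.
-/

open Set

section

variable {E F : Type*} [NormedAddCommGroup E] [NormedSpace ℝ E]
  [NormedAddCommGroup F] [NormedSpace ℝ F]

theorem norm_sub_sub_le_of_hasDerivAt_of_norm_sub_le {g g' g'' : ℝ → F} {c : F} {M : ℝ}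
    (hg : ∀ t, HasDerivAt g (g' t) t) (hg' : ∀ t, HasDerivAt g' (g'' t) t) (h0 : g' 0 = 0)
    (hM : ∀ t ∈ Icc (0 : ℝ) 1, ‖g'' t - (2 : ℝ) • c‖ ≤ M) :
    ‖g 1 - g 0 - c‖ ≤ M := by
  have hψ : ∀ t, HasDerivAt (fun s => g' s - (2 * s) • c) (g'' t - (2 : ℝ) • c) t := fun t =>
    ((hg' t).sub (((hasDerivAt_id t).const_mul 2).smul_const c)).congr_deriv (by simp)
  have hψM : ∀ t ∈ Icc (0 : ℝ) 1, ‖g' t - (2 * t) • c‖ ≤ M := fun t ht => by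
    have := (convex_Icc (0 : ℝ) 1).norm_image_sub_le_of_norm_hasDerivWithin_le
      (fun s _ => (hψ s).hasDerivWithinAt) hM (left_mem_Icc.2 zero_le_one) ht
    simp only [h0, mul_zero, zero_smul, sub_zero, Real.norm_eq_abs, abs_of_nonneg ht.1] at this
    have hM0 : 0 ≤ M := (norm_nonneg _).trans (hM 0 (left_mem_Icc.2 zero_le_one))
    exact this.trans (mul_le_of_le_one_right hM0 ht.2)
  have hφ : ∀ t, HasDerivAt (fun s => g s - s ^ 2 • c) (g' t - (2 * t) • c) t := fun t =>
    ((hg t).sub ((hasDerivAt_pow 2 t).smul_const c)).congr_deriv (by simp)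
  have := (convex_Icc (0 : ℝ) 1).norm_image_sub_le_of_norm_hasDerivWithin_le
    (fun s _ => (hφ s).hasDerivWithinAt) hψM (left_mem_Icc.2 zero_le_one)
    (right_mem_Icc.2 zero_le_one)
  simpa [sub_right_comm _ c] using this

theorem norm_fderiv_fderiv_sub_le {f : E → F} {C : ℝ} (hf : ContDiff ℝ 3 f)
    (hC : ∀ x, ‖iteratedFDeriv ℝ 3 f x‖ ≤ C) (x y : E) :
    ‖fderiv ℝ (fderiv ℝ f) x - fderiv ℝ (fderiv ℝ f) y‖ ≤ C * ‖x - y‖ := by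
  have hd : Differentiable ℝ (fderiv ℝ (fderiv ℝ f)) :=
    ((hf.fderiv_right (m := 2) (by norm_num)).fderiv_right (m := 1) (by norm_num)).differentiable
      (by norm_num)
  refine convex_univ.norm_image_sub_le_of_norm_fderiv_le (𝕜 := ℝ) (f := fderiv ℝ (fderiv ℝ f))
    (fun z _ => hd z) (fun z _ => ?_) trivial trivial
  simpa only [← norm_iteratedFDeriv_fderiv, norm_iteratedFDeriv_zero] using hC z

theorem hasDerivAt_comp_add_smul {G : Type*} [NormedAddCommGroup G] [NormedSpace ℝ G]
    {f : E → G} {p v : E} {t : ℝ} (hf : DifferentiableAt ℝ f (p + t • v)) :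
    HasDerivAt (fun s : ℝ => f (p + s • v)) (fderiv ℝ f (p + t • v) v) t := by
  have hline : HasDerivAt (fun s : ℝ => p + s • v) v t := by
    simpa using ((hasDerivAt_id t).smul_const v).const_add p
  exact hf.hasFDerivAt.comp_hasDerivAt t hline

theorem bilin_apply_self_add_apply_self_rotate (B : E →L[ℝ] E →L[ℝ] F) (x y : E) (γ : ℝ) :
    B (Real.cos γ • x + Real.sin γ • y) (Real.cos γ • x + Real.sin γ • y)
      + B (-Real.sin γ • x + Real.cos γ • y) (-Real.sin γ • x + Real.cos γ • y)
      = B x x + B y y := by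
  simp only [map_add, map_smul, add_apply, smul_apply]
  linear_combination (norm := module) (Real.sin_sq_add_cos_sq γ) • (B x x + B y y)

theorem norm_fderiv_fderiv_apply_sub_le {f : E → F} {C : ℝ} (hf : ContDiff ℝ 3 f)
    (hC : ∀ x, ‖iteratedFDeriv ℝ 3 f x‖ ≤ C) (p u : E) {t : ℝ} (ht : t ∈ Icc (0 : ℝ) 1) :
    ‖fderiv ℝ (fderiv ℝ f) (p + t • u) u u - fderiv ℝ (fderiv ℝ f) p u u‖ ≤ C * ‖u‖ ^ 3 := by
  have hC0 : 0 ≤ C := (norm_nonneg _).trans (hC p)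
  have hdist : ‖p + t • u - p‖ ≤ ‖u‖ := by
    simpa [norm_smul, abs_of_nonneg ht.1] using mul_le_of_le_one_left (norm_nonneg u) ht.2
  calc ‖fderiv ℝ (fderiv ℝ f) (p + t • u) u u - fderiv ℝ (fderiv ℝ f) p u u‖
      = ‖(fderiv ℝ (fderiv ℝ f) (p + t • u) - fderiv ℝ (fderiv ℝ f) p) u u‖ := by simp
    _ ≤ ‖fderiv ℝ (fderiv ℝ f) (p + t • u) - fderiv ℝ (fderiv ℝ f) p‖ * ‖u‖ * ‖u‖ :=
      ContinuousLinearMap.le_opNorm₂ _ u u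
    _ ≤ C * ‖u‖ * ‖u‖ * ‖u‖ := by
      gcongr
      exact (norm_fderiv_fderiv_sub_le hf hC _ _).trans (by gcongr)
    _ = C * ‖u‖ ^ 3 := by ring

theorem norm_add_add_sub_two_smul_sub_fderiv_fderiv_le {f : E → F} {C : ℝ} (hf : ContDiff ℝ 3 f)
    (hC : ∀ x, ‖iteratedFDeriv ℝ 3 f x‖ ≤ C) (p v : E) :
    ‖f (p + v) + f (p - v) - (2 : ℝ) • f p - fderiv ℝ (fderiv ℝ f) p v v‖ ≤ 2 * C * ‖v‖ ^ 3 := by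
  set A := fderiv ℝ (fderiv ℝ f)
  have hd₁ : Differentiable ℝ f := hf.differentiable (by norm_num)
  have hd₂ : Differentiable ℝ (fderiv ℝ f) :=
    (hf.fderiv_right (m := 2) (by norm_num)).differentiable (by norm_num)
  have hf' (u : E) (t : ℝ) :
      HasDerivAt (fun s : ℝ => f (p + s • u)) (fderiv ℝ f (p + t • u) u) t :=
    hasDerivAt_comp_add_smul (hd₁ _)
  have hf'' (u : E) (t : ℝ) :
      HasDerivAt (fun s : ℝ => fderiv ℝ f (p + s • u) u) (A (p + t • u) u u) t :=
    ((hasDerivAt_comp_add_smul (hd₂ _)).clm_apply (hasDerivAt_const t u)).congr_deriv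
      (by simp [A])
  have hTaylor := norm_sub_sub_le_of_hasDerivAt_of_norm_sub_le (c := A p v v) (M := 2 * C * ‖v‖ ^ 3)
    (fun t => (hf' v t).add (hf' (-v) t)) (fun t => (hf'' v t).add (hf'' (-v) t))
    (by simp) fun t ht => by
      calc ‖A (p + t • v) v v + A (p + t • -v) (-v) (-v) - (2 : ℝ) • A p v v‖
          = ‖(A (p + t • v) v v - A p v v) + (A (p + t • -v) (-v) (-v) - A p (-v) (-v))‖ := by
            congr 1; simp only [map_neg, neg_apply, neg_neg]; module
        _ ≤ C * ‖v‖ ^ 3 + C * ‖-v‖ ^ 3 :=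
          norm_add_le_of_le (norm_fderiv_fderiv_apply_sub_le hf hC p v ht)
            (norm_fderiv_fderiv_apply_sub_le hf hC p (-v) ht)
        _ = 2 * C * ‖v‖ ^ 3 := by rw [norm_neg]; ring
  convert hTaylor using 3
  simp [two_smul, sub_eq_add_neg]

end

theorem exists_pos_forall_mul_pow_le {K ε : ℝ} (hK : 0 ≤ K) (hε : 0 < ε) {n : ℕ} (hn : n ≠ 0) :
    ∃ h₀ > 0, ∀ h : ℝ, 0 ≤ h → h ≤ h₀ → K * h ^ n ≤ ε := by
  refine ⟨min 1 (ε / (K + 1)), by positivity, fun h h0 hh => ?_⟩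
  have hpow : h ^ n ≤ h := pow_le_of_le_one h0 (hh.trans (min_le_left _ _)) hn
  have hε' : h * (K + 1) ≤ ε := (le_div_iff₀ (by positivity)).1 (hh.trans (min_le_right _ _))
  nlinarith [mul_le_mul_of_nonneg_left hpow hK]

open EuclideanSpace in
theorem norm_smul_single_zero_add_smul_single_one {a b : ℝ} (hab : a ^ 2 + b ^ 2 = 1) :
    ‖a • single (0 : Fin 2) (1 : ℝ) + b • single (1 : Fin 2) (1 : ℝ)‖ = 1 := by
  simp [EuclideanSpace.norm_eq, Fin.sum_univ_two, hab]

open EuclideanSpace in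
/-- For a three times continuously differentiable image signal `f : ℝ² → ℝ` with
uniformly bounded third derivative, and any prescribed tolerance `ε > 0`, there is a
resolution `h₀ > 0` such that for all grid spacings `0 < h ≤ h₀` and all points `p`, the
equivariance gap of the degree-one filter under a rotation of the stencil by `γ` around
`p` is at most `ε`. -/
theorem degree_one_filter_rotation_gap_small_for_high_resolution
    (f : EuclideanSpace ℝ (Fin 2) → ℝ) (C₃ : ℝ)
    (hf : ContDiff ℝ 3 f)
    (hbound : ∀ x, ‖iteratedFDeriv ℝ 3 f x‖ ≤ C₃)
    (α₀ α₁ : ℝ) (γ : ℝ) :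
    ∀ ε : ℝ, 0 < ε → ∃ h₀ : ℝ, 0 < h₀ ∧ ∀ h : ℝ, 0 < h → h ≤ h₀ →
      ∀ p : EuclideanSpace ℝ (Fin 2),
      |((α₀ + α₁) * f p
          - (α₁ / 4) *
            (f (p + h • (Real.cos γ • single (0 : Fin 2) (1 : ℝ) + Real.sin γ • single (1 : Fin 2) (1 : ℝ)))
              + f (p - h • (Real.cos γ • single (0 : Fin 2) (1 : ℝ) + Real.sin γ • single (1 : Fin 2) (1 : ℝ)))
              + f (p + h • (-Real.sin γ • single (0 : Fin 2) (1 : ℝ) + Real.cos γ • single (1 : Fin 2) (1 : ℝ)))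
              + f (p - h • (-Real.sin γ • single (0 : Fin 2) (1 : ℝ) + Real.cos γ • single (1 : Fin 2) (1 : ℝ)))))
        - ((α₀ + α₁) * f p
          - (α₁ / 4) *
            (f (p + h • single (0 : Fin 2) (1 : ℝ)) + f (p - h • single (0 : Fin 2) (1 : ℝ))
              + f (p + h • single (1 : Fin 2) (1 : ℝ)) + f (p - h • single (1 : Fin 2) (1 : ℝ))))|
        ≤ ε := by
  intro ε hε
  have hC₃ : 0 ≤ C₃ := (norm_nonneg _).trans (hbound 0)
  obtain ⟨h₀, hh₀, hsmall⟩ :=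
    exists_pos_forall_mul_pow_le (K := 2 * |α₁| * C₃) (by positivity) hε three_ne_zero
  refine ⟨h₀, hh₀, fun h hh hle p => ?_⟩
  set e₁ : EuclideanSpace ℝ (Fin 2) := single 0 1
  set e₂ : EuclideanSpace ℝ (Fin 2) := single 1 1
  set A := fderiv ℝ (fderiv ℝ f) p
  set R : EuclideanSpace ℝ (Fin 2) → ℝ :=
    fun u => f (p + h • u) + f (p - h • u) - 2 * f p - h ^ 2 * A u u
  have hR (u : EuclideanSpace ℝ (Fin 2)) (hu : ‖u‖ = 1) : |R u| ≤ 2 * C₃ * h ^ 3 := by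
    simpa [R, A, norm_smul, hu, abs_of_pos hh, pow_two, mul_assoc] using
      norm_add_add_sub_two_smul_sub_fderiv_fderiv_le hf hbound p (h • u)
  obtain ⟨h₁, h₁'⟩ := abs_le.1 (hR e₁ (by simp [e₁]))
  obtain ⟨h₂, h₂'⟩ := abs_le.1 (hR e₂ (by simp [e₂]))
  obtain ⟨h₃, h₃'⟩ := abs_le.1 (hR _ (norm_smul_single_zero_add_smul_single_one
    (a := Real.cos γ) (b := Real.sin γ) (by rw [add_comm, Real.sin_sq_add_cos_sq])))
  obtain ⟨h₄, h₄'⟩ := abs_le.1 (hR _ (norm_smul_single_zero_add_smul_single_one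
    (a := -Real.sin γ) (b := Real.cos γ) (by rw [neg_sq, Real.sin_sq_add_cos_sq])))
  have htrace := bilin_apply_self_add_apply_self_rotate A e₁ e₂ γ
  calc _ = |α₁ / 4| * |R e₁ + R e₂ - R (Real.cos γ • e₁ + Real.sin γ • e₂)
        - R (-Real.sin γ • e₁ + Real.cos γ • e₂)| := by
        rw [← abs_mul]; congr 1; simp only [R]; linear_combination (-α₁ / 4 * h ^ 2) * htrace
    _ ≤ |α₁| / 4 * (8 * C₃ * h ^ 3) := by
        rw [abs_div, abs_of_pos (four_pos : (0 : ℝ) < 4)]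
        gcongr
        exact abs_le.2 ⟨by linarith, by linarith⟩
    _ = 2 * |α₁| * C₃ * h ^ 3 := by ring
    _ ≤ ε := hsmall h hh.le hle
end

section
/- Let L be the normalized Laplacian of a finite weighted graph on vertex set V with all degrees positive, and let σ : V → V be a graph isometric transformation. Let T_k denote the k-th Chebyshev polynomial of the first kind, and let L̃ = L − I be the shifted Laplacian. Then the Chebyshev filters are equivariant to σ: for every k and every graph signal y : V → ℝ, T_k(L̃)·(y∘σ) = (T_k(L̃)·y)∘σ, where T_k(L̃) is the Chebyshev polynomial evaluated at the matrix L̃. -/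
/-- The degree of a vertex `v` in the weighted graph with adjacency matrix `A`. -/
noncomputable def graphDegree {V : Type*} [Fintype V] (A : Matrix V V ℝ) (v : V) : ℝ :=
  ∑ u, A v u

/-- The normalized Laplacian of the weighted graph with adjacency matrix `A`. -/
noncomputable def normLap {V : Type*} [Fintype V] [DecidableEq V] (A : Matrix V V ℝ) :
    Matrix V V ℝ :=
  Matrix.of fun u v =>
    if u = v then 1 else -A u v / Real.sqrt (graphDegree A u * graphDegree A v)

/-- The subalgebra of matrices invariant under the permutation `σ`. -/
def permInvariantSubalgebra {V : Type*} [Fintype V] [DecidableEq V] (σ : Equiv.Perm V) :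
    Subalgebra ℝ (Matrix V V ℝ) where
  carrier := {B | ∀ u v, B (σ u) (σ v) = B u v}
  mul_mem' := by
    intro B C hB hC u v
    show ∑ w, B (σ u) w * C w (σ v) = ∑ w, B u w * C w v
    rw [← Equiv.sum_comp σ (fun w => B (σ u) w * C w (σ v))]
    exact Finset.sum_congr rfl fun w _ => by rw [hB u w, hC w v]
  add_mem' := by intro B C hB hC u v; simp [hB u v, hC u v]
  algebraMap_mem' := by
    intro r u v
    simp only [Matrix.algebraMap_matrix_apply]
    rcases eq_or_ne u v with h | h
    · simp [h]
    · simp [h, fun h' => h (σ.injective h')]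

/-- Chebyshev filters `T_k(L̃)` with `L̃ = L − I` are equivariant to graph isometric
transformations: `T_k(L̃)·(y∘σ) = (T_k(L̃)·y)∘σ`. -/
theorem chebyshev_filter_equivariant {V : Type*} [Fintype V] [DecidableEq V]
    (A : Matrix V V ℝ)
    (hsymm : ∀ u v, A u v = A v u)
    (hnonneg : ∀ u v, 0 ≤ A u v)
    (hdiag : ∀ v, A v v = 0)
    (hdeg : ∀ v, 0 < graphDegree A v)
    (σ : Equiv.Perm V) (hσ : ∀ u v, A (σ u) (σ v) = A u v)
    (k : ℕ) (y : V → ℝ) :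
    (Polynomial.aeval (normLap A - 1) (Polynomial.Chebyshev.T ℝ k)).mulVec (y ∘ σ)
      = ((Polynomial.aeval (normLap A - 1) (Polynomial.Chebyshev.T ℝ k)).mulVec y) ∘ σ := by
  have hdegσ : ∀ v, graphDegree A (σ v) = graphDegree A v := by
    intro v
    unfold graphDegree
    rw [← Equiv.sum_comp σ (fun w => A (σ v) w)]
    simp [hσ]
  have hL : normLap A - 1 ∈ permInvariantSubalgebra σ := by
    intro u v
    simp only [Matrix.sub_apply, Matrix.one_apply, normLap, Matrix.of_apply]
    rcases eq_or_ne u v with h | h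
    · simp [h]
    · simp [h, fun h' => h (σ.injective h'), hσ, hdegσ]
  have hM : (Polynomial.aeval (normLap A - 1) (Polynomial.Chebyshev.T ℝ k)) ∈
      permInvariantSubalgebra σ := by
    have := Polynomial.aeval_mem_adjoin_singleton ℝ (x := normLap A - 1)
      (p := Polynomial.Chebyshev.T ℝ k)
    exact Algebra.adjoin_le (by simpa using hL) this
  set M := Polynomial.aeval (normLap A - 1) (Polynomial.Chebyshev.T ℝ k) with hMdef
  funext v
  simp only [Matrix.mulVec, Function.comp_apply, dotProduct]
  rw [← Equiv.sum_comp σ (fun w => M (σ v) w * y w)]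
  exact Finset.sum_congr rfl fun w _ => by rw [hM v w]
end

section
/- Let L be the normalized Laplacian of a finite weighted graph on vertex set V of size N with all degrees positive, let σ : V → V be a graph isometric transformation, and let L̃ = L − I. For a graph signal z : V → ℝ and each k, let t_k(z) = T_k(L̃)·z be the k-th Chebyshev-filtered signal, and define the statistics μ_k(z) = (1/N)·Σ_{v∈V} |t_k(z)(v)| and σ²_k(z) = (1/N)·Σ_{v∈V} (|t_k(z)(v)| − μ_k(z))². Then these statistics are invariant to graph isometric transformations of the input: μ_k(z∘σ) = μ_k(z) and σ²_k(z∘σ) = σ²_k(z) for every k and every signal z. -/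
/-- The `k`-th Chebyshev filter `T_k(L̃)` with `L̃ = L − I`. -/
noncomputable def chebFilter {V : Type*} [Fintype V] [DecidableEq V]
    (A : Matrix V V ℝ) (k : ℕ) : Matrix V V ℝ :=
  Polynomial.aeval (normLap A - 1) (Polynomial.Chebyshev.T ℝ k)

/-- Mean of the entrywise absolute values of the `k`-th Chebyshev-filtered signal. -/
noncomputable def statMean {V : Type*} [Fintype V] [DecidableEq V]
    (A : Matrix V V ℝ) (k : ℕ) (z : V → ℝ) : ℝ :=
  (1 / (Fintype.card V : ℝ)) * ∑ v, |(chebFilter A k).mulVec z v|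

/-- Variance of the entrywise absolute values of the `k`-th Chebyshev-filtered signal. -/
noncomputable def statVar {V : Type*} [Fintype V] [DecidableEq V]
    (A : Matrix V V ℝ) (k : ℕ) (z : V → ℝ) : ℝ :=
  (1 / (Fintype.card V : ℝ)) * ∑ v, (|(chebFilter A k).mulVec z v| - statMean A k z) ^ 2

/-! An isometry σ preserves degrees, so relabelling rows and columns of the normalized Laplacian
by σ leaves it unchanged, and hence also every polynomial in `L - 1`, in particular every
Chebyshev filter. Filtering therefore commutes with precomposition by σ, and the mean and variance,
being averages over all vertices, are unchanged by the relabelling. -/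

-- `M ↦ M.submatrix e e` is an algebra isomorphism.
theorem Matrix.submatrix_aeval_equiv {R m n : Type*} [CommSemiring R]
    [Fintype m] [DecidableEq m] [Fintype n] [DecidableEq n]
    (M : Matrix n n R) (e : m ≃ n) (p : Polynomial R) :
    (Polynomial.aeval M p).submatrix e e = Polynomial.aeval (M.submatrix e e) p :=
  (Polynomial.aeval_algHom_apply (Matrix.reindexAlgEquiv R R e.symm) M p).symm

open scoped Matrix

section GraphIsometry

variable {V : Type*} [Fintype V] (A : Matrix V V ℝ) (σ : Equiv.Perm V)

theorem graphDegree_perm (hσ : ∀ u v, A (σ u) (σ v) = A u v)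
    (v : V) : graphDegree A (σ v) = graphDegree A v := by
  unfold graphDegree
  rw [← Equiv.sum_comp σ (A (σ v))]
  simp only [hσ]

variable [DecidableEq V]

theorem normLap_submatrix_perm (hσ : ∀ u v, A (σ u) (σ v) = A u v) :
    (normLap A).submatrix σ σ = normLap A := by
  ext u v
  simp [normLap, σ.injective.eq_iff, hσ, graphDegree_perm A σ hσ]

theorem chebFilter_submatrix_perm (hσ : ∀ u v, A (σ u) (σ v) = A u v)
    (k : ℕ) : (chebFilter A k).submatrix σ σ = chebFilter A k := by
  rw [chebFilter, Matrix.submatrix_aeval_equiv]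
  change Polynomial.aeval ((normLap A).submatrix σ σ - (1 : Matrix V V ℝ).submatrix σ σ) _ = _
  rw [normLap_submatrix_perm A σ hσ, Matrix.submatrix_one_equiv]

theorem chebFilter_mulVec_comp_perm (hσ : ∀ u v, A (σ u) (σ v) = A u v)
    (k : ℕ) (z : V → ℝ) :
    chebFilter A k *ᵥ (z ∘ σ) = (chebFilter A k *ᵥ z) ∘ σ := by
  conv_lhs => rw [← chebFilter_submatrix_perm A σ hσ k]
  rw [Matrix.submatrix_mulVec_equiv, Function.comp_assoc, σ.self_comp_symm, Function.comp_id]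

theorem statMean_comp_perm (hσ : ∀ u v, A (σ u) (σ v) = A u v)
    (k : ℕ) (z : V → ℝ) : statMean A k (z ∘ σ) = statMean A k z := by
  unfold statMean
  rw [chebFilter_mulVec_comp_perm A σ hσ k z]
  congr 1
  exact Equiv.sum_comp σ fun v => |(chebFilter A k *ᵥ z) v|

end GraphIsometry

theorem statistical_layer_invariant_general {V : Type*} [Fintype V] [DecidableEq V]
    (A : Matrix V V ℝ)
    (σ : Equiv.Perm V) (hσ : ∀ u v, A (σ u) (σ v) = A u v)
    (k : ℕ) (z : V → ℝ) :
    statMean A k (z ∘ σ) = statMean A k z ∧ statVar A k (z ∘ σ) = statVar A k z := by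
  refine ⟨statMean_comp_perm A σ hσ k z, ?_⟩
  unfold statVar
  rw [statMean_comp_perm A σ hσ k z, chebFilter_mulVec_comp_perm A σ hσ k z]
  congr 1
  exact Equiv.sum_comp σ fun v => (|(chebFilter A k *ᵥ z) v| - statMean A k z) ^ 2

/-- The statistics (mean and variance of the absolute values of the Chebyshev-filtered
signals) are invariant to graph isometric transformations of the input signal. -/
theorem statistical_layer_invariant {V : Type*} [Fintype V] [DecidableEq V]
    (A : Matrix V V ℝ)
    (hsymm : ∀ u v, A u v = A v u)
    (hnonneg : ∀ u v, 0 ≤ A u v)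
    (hdiag : ∀ v, A v v = 0)
    (hdeg : ∀ v, 0 < graphDegree A v)
    (σ : Equiv.Perm V) (hσ : ∀ u v, A (σ u) (σ v) = A u v)
    (k : ℕ) (z : V → ℝ) :
    statMean A k (z ∘ σ) = statMean A k z ∧ statVar A k (z ∘ σ) = statVar A k z :=
  statistical_layer_invariant_general A σ hσ k z
end
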